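/- arXiv:2408.01974 — 2 statements merged into one kernel-verified Lean document; each statement's English description precedes it below -/
import Mathlib

section
/- Let G be a finite soluble CPPO-group. Then the number of prime divisors of |G'| is at most the Fitting height of G. -/
/-- Relative lower central series of `K` over `N`. -/
def relLCS {G : Type*} [Group G] (N K : Subgroup G) : ℕ → Subgroup G
  | 0 => K
  | (m + 1) => ⁅relLCS N K m, K⁆ ⊔ N

/-- The Fitting height: the least length of a normal series with nilpotent factors. -/
noncomputable def fittingHeight (G : Type*) [Group G] : ℕ :=
  sInf {n : ℕ | ∃ H : ℕ → Subgroup G, H 0 = ⊥ ∧ H n = ⊤ ∧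
    (∀ i, (H i).Normal) ∧ (∀ i, H i ≤ H (i + 1)) ∧
    ∀ i < n, ∃ m, relLCS (H i) (H (i + 1)) m ≤ H i}

open scoped commutatorElement

/-!
Let `N` be a nilpotent normal subgroup of a CPPO-group `G`. Elements of `N` of prime-power orders
for distinct primes commute, so a product of two such elements, both nontrivial, has an order that
is not a prime power and is not a commutator. Applied to the expansions of `⁅g * h, x⁆` and
`⁅g, x * y⁆`, this forces all nontrivial commutators `⁅g, x⁆` with `x ∈ N` to have `p`-power
order for a single prime `p`, so `⁅G, N⁆` is a `p`-group. For `N` the first term of a Fitting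
series, `N` becomes central in `G ⧸ ⁅G, N⁆`, whose Fitting height therefore drops by one, and
`|G'| = |(G ⧸ ⁅G, N⁆)'| * |⁅G, N⁆|` gives the bound by induction.
-/

open Subgroup

theorem Nat.eq_zero_or_eq_zero_of_prime_pow_mul_prime_pow_eq {p q r a b k : ℕ} (hp : p.Prime)
    (hq : q.Prime) (hr : r.Prime) (hpq : p ≠ q) (h : p ^ a * q ^ b = r ^ k) : a = 0 ∨ b = 0 := by
  by_contra! hab
  have hpr : p = r := (Nat.prime_dvd_prime_iff_eq hp hr).mp
    (hp.dvd_of_dvd_pow (h ▸ dvd_mul_of_dvd_left (dvd_pow_self p hab.1) _))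
  have hqr : q = r := (Nat.prime_dvd_prime_iff_eq hq hr).mp
    (hq.dvd_of_dvd_pow (h ▸ dvd_mul_of_dvd_right (dvd_pow_self q hab.2) _))
  exact hpq (hpr.trans hqr.symm)

section

variable {G : Type*} [Group G]

theorem orderOf_conj (g x : G) : orderOf (g * x * g⁻¹) = orderOf x :=
  (SemiconjBy.orderOf_eq g (SemiconjBy.conj_mk g x)).symm

theorem Subgroup.Normal.commutatorElement_mem {N : Subgroup G} (hN : N.Normal) (g : G) {x : G}
    (hx : x ∈ N) : ⁅g, x⁆ ∈ N :=
  N.mul_mem (hN.conj_mem x hx g) (N.inv_mem hx)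

theorem Sylow.mem_of_orderOf_eq_prime_pow {p k : ℕ} [Fact p.Prime] [Finite (Sylow p G)]
    (P : Sylow p G) [P.Normal] {x : G} (hx : orderOf x = p ^ k) : x ∈ P := by
  obtain ⟨Q, hQ⟩ := (IsPGroup.of_card (by rw [Nat.card_zpowers, hx]) :
    IsPGroup p (zpowers x)).exists_le_sylow
  obtain ⟨g, rfl⟩ := MulAction.exists_smul_eq G P Q
  rw [Sylow.smul_eq_of_normal] at hQ
  exact hQ (mem_zpowers x)

theorem commute_of_orderOf_eq_prime_pow [Finite G] [Group.IsNilpotent G] {p q a b : ℕ}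
    (hp : p.Prime) (hq : q.Prime) (hpq : p ≠ q) {x y : G}
    (hx : orderOf x = p ^ a) (hy : orderOf y = q ^ b) : Commute x y := by
  have := Fact.mk hp
  have := Fact.mk hq
  obtain ⟨P⟩ := (inferInstance : Nonempty (Sylow p G))
  obtain ⟨Q⟩ := (inferInstance : Nonempty (Sylow q G))
  exact commute_of_normal_of_disjoint _ _ inferInstance inferInstance
    (IsPGroup.disjoint_of_ne p q hpq _ _ P.isPGroup' Q.isPGroup') x y
    (P.mem_of_orderOf_eq_prime_pow hx) (Q.mem_of_orderOf_eq_prime_pow hy)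

theorem IsPGroup.card_primeFactors_le_one [Finite G] {p : ℕ} (h : IsPGroup p G)
    (hp : p.Prime) : (Nat.card G).primeFactors.card ≤ 1 :=
  (Finset.card_le_card ((isPGroup_iff_primeFactors_card_subset hp.ne_zero).mp h)).trans
    (by simp [hp.primeFactors])

theorem map_mk'_le_center_of_commutator_le {M N : Subgroup G} [M.Normal]
    (h : ⁅(⊤ : Subgroup G), N⁆ ≤ M) : N.map (QuotientGroup.mk' M) ≤ center (G ⧸ M) := by
  rw [← commutator_top_left_eq_bot_iff_le_center,
    ← map_top_of_surjective _ (QuotientGroup.mk'_surjective M), ← map_commutator,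
    Subgroup.map_eq_bot_iff, QuotientGroup.ker_mk']
  exact h

theorem card_eq_card_map_mk'_mul_card {M K : Subgroup G} [M.Normal] (h : M ≤ K) :
    Nat.card K = Nat.card (K.map (QuotientGroup.mk' M)) * Nat.card M := by
  rw [← relIndex_ker, QuotientGroup.ker_mk', ← relIndex_bot_left, ← relIndex_bot_left M,
    mul_comm, relIndex_mul_relIndex ⊥ M K bot_le h]

theorem card_commutator_eq_card_commutator_quotient_mul {M : Subgroup G} [M.Normal]
    (h : M ≤ commutator G) :
    Nat.card (commutator G) = Nat.card (commutator (G ⧸ M)) * Nat.card M := by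
  rw [card_eq_card_map_mk'_mul_card h, map_commutator_eq, QuotientGroup.range_mk', commutator_def]

theorem lowerCentralSeries_le_relLCS (Z K : Subgroup G) (m : ℕ) :
    K.lowerCentralSeries m ≤ relLCS Z K m := by
  induction m with
  | zero => exact le_rfl
  | succ m ih => exact le_sup_of_le_left (commutator_mono ih le_rfl)

theorem isNilpotent_of_relLCS_le_center {Z K : Subgroup G} (hZ : Z ≤ center G) {m : ℕ}
    (h : relLCS Z K m ≤ Z) : Group.IsNilpotent K :=
  isNilpotent_of_lowerCentralSeries_eq_bot <| Subgroup.lowerCentralSeries_succ_eq_bot K <|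
    ((lowerCentralSeries_le_relLCS Z K m).trans h).trans hZ

theorem map_relLCS {G' : Type*} [Group G'] (f : G →* G') (N K : Subgroup G) (m : ℕ) :
    (relLCS N K m).map f = relLCS (N.map f) (K.map f) m := by
  induction m with
  | zero => rfl
  | succ m ih => rw [relLCS, relLCS, Subgroup.map_sup, map_commutator, ih]

end

def IsCPPO (G : Type*) [Group G] : Prop :=
  ∀ x y : G, orderOf ⁅x, y⁆ = 1 ∨ IsPrimePow (orderOf ⁅x, y⁆)

namespace IsCPPO

variable {G : Type*} [Group G]

theorem exists_prime_pow (hG : IsCPPO G) (x y : G) :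
    ∃ p k, p.Prime ∧ orderOf ⁅x, y⁆ = p ^ k := by
  rcases hG x y with h | h
  · exact ⟨2, 0, Nat.prime_two, h⟩
  · obtain ⟨p, k, hp, -, hpk⟩ := (isPrimePow_nat_iff _).mp h
    exact ⟨p, k, hp, hpk.symm⟩

theorem of_surjective {G' : Type*} [Group G'] (hG : IsCPPO G) (f : G →* G')
    (hf : Function.Surjective f) : IsCPPO G' := by
  intro x y
  obtain ⟨a, rfl⟩ := hf x
  obtain ⟨b, rfl⟩ := hf y
  have hdvd := orderOf_map_dvd f ⁅a, b⁆
  rw [map_commutatorElement] at hdvd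
  rcases hG a b with h | h
  · exact .inl (Nat.dvd_one.mp (h ▸ hdvd))
  · exact or_iff_not_imp_left.mpr (h.dvd hdvd)

variable [Finite G] (hG : IsCPPO G) {N : Subgroup G} [Group.IsNilpotent N]
include hG

section

variable {p q : ℕ} (hp : p.Prime) (hq : q.Prime) (hpq : p ≠ q)
include hp hq hpq

theorem eq_one_or_eq_one_of_mul_eq_commutatorElement {a b : ℕ} {x y w z : G}
    (hx : x ∈ N) (hy : y ∈ N) (hxa : orderOf x = p ^ a) (hyb : orderOf y = q ^ b)
    (h : x * y = ⁅w, z⁆) : x = 1 ∨ y = 1 := by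
  have hxy : Commute x y := by
    have := commute_of_orderOf_eq_prime_pow hp hq hpq (x := (⟨x, hx⟩ : N)) (y := ⟨y, hy⟩)
      (by rwa [Subgroup.orderOf_mk]) (by rwa [Subgroup.orderOf_mk])
    exact this.map N.subtype
  have hcop : (orderOf x).Coprime (orderOf y) := by
    rw [hxa, hyb]
    exact Nat.Coprime.pow _ _ ((Nat.coprime_primes hp hq).mpr hpq)
  obtain ⟨r, k, hr, hrk⟩ := hG.exists_prime_pow w z
  have hpow : p ^ a * q ^ b = r ^ k := by
    rw [← hxa, ← hyb, ← hxy.orderOf_mul_eq_mul_orderOf_of_coprime hcop, h, hrk]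
  rcases Nat.eq_zero_or_eq_zero_of_prime_pow_mul_prime_pow_eq hp hq hr hpq hpow with rfl | rfl
  · exact .inl (by simpa using hxa)
  · exact .inr (by simpa using hyb)

theorem eq_one_or_eq_one_of_commutatorElement_mul_left [hN : N.Normal] {a b : ℕ} {g h x : G}
    (hx : x ∈ N) (hhx : orderOf ⁅h, x⁆ = p ^ a) (hgx : orderOf ⁅g, x⁆ = q ^ b) :
    ⁅h, x⁆ = 1 ∨ ⁅g, x⁆ = 1 := by
  have := hG.eq_one_or_eq_one_of_mul_eq_commutatorElement hp hq hpq
    (hN.conj_mem _ (hN.commutatorElement_mem h hx) g) (hN.commutatorElement_mem g hx)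
    (by rwa [orderOf_conj]) hgx (commutatorElement_mul_left_eq_conj_mul g h x).symm
  simpa using this

theorem eq_one_or_eq_one_of_commutatorElement_mul_right [hN : N.Normal] {a b : ℕ} {g x y : G}
    (hx : x ∈ N) (hy : y ∈ N) (hgx : orderOf ⁅g, x⁆ = p ^ a) (hgy : orderOf ⁅g, y⁆ = q ^ b) :
    ⁅g, x⁆ = 1 ∨ ⁅g, y⁆ = 1 := by
  have := hG.eq_one_or_eq_one_of_mul_eq_commutatorElement hp hq hpq
    (hN.commutatorElement_mem g hx) (hN.conj_mem _ (hN.commutatorElement_mem g hy) x)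
    hgx (by rwa [orderOf_conj])
    (by rw [commutatorElement_mul_right_eq_mul_conj g x y]; group : _ = ⁅g, x * y⁆)
  simpa using this

end

variable [hN : N.Normal]

theorem commutatorElement_eq_one_of_prime_ne {p q a b : ℕ} (hp : p.Prime) (hq : q.Prime)
    (hpq : p ≠ q) {g h x y : G} (hx : x ∈ N) (hy : y ∈ N) (hgx : orderOf ⁅g, x⁆ = p ^ a)
    (hgx1 : ⁅g, x⁆ ≠ 1) (hhy : orderOf ⁅h, y⁆ = q ^ b) (hhy1 : ⁅h, y⁆ ≠ 1) : ⁅h, x⁆ = 1 := by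
  obtain ⟨r, s, hr, hrs⟩ := hG.exists_prime_pow h x
  by_cases hrp : r = p
  · subst hrp
    exact (hG.eq_one_or_eq_one_of_commutatorElement_mul_right hr hq hpq hx hy hrs
      hhy).resolve_right hhy1
  · exact (hG.eq_one_or_eq_one_of_commutatorElement_mul_left hr hp hrp hx hrs
      hgx).resolve_right hgx1

/- If the primes differ, the mixed commutators `⁅h, x⁆` and `⁅g, y⁆` vanish, so
`⁅g * h, x⁆ = ⁅g, x⁆` while `⁅g * h, y⁆` is conjugate to `⁅h, y⁆`, and these two clash. -/
theorem prime_eq_of_commutatorElement_ne_one {p q a b : ℕ} (hp : p.Prime) (hq : q.Prime)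
    {g h x y : G} (hx : x ∈ N) (hy : y ∈ N) (hgx : orderOf ⁅g, x⁆ = p ^ a)
    (hgx1 : ⁅g, x⁆ ≠ 1) (hhy : orderOf ⁅h, y⁆ = q ^ b) (hhy1 : ⁅h, y⁆ ≠ 1) : p = q := by
  by_contra hpq
  have hhx := hG.commutatorElement_eq_one_of_prime_ne hp hq hpq hx hy hgx hgx1 hhy hhy1
  have hgy := hG.commutatorElement_eq_one_of_prime_ne hq hp (Ne.symm hpq) hy hx hhy hhy1 hgx hgx1
  have e1 : ⁅g * h, x⁆ = ⁅g, x⁆ := by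
    rw [commutatorElement_mul_left_eq_conj_mul, hhx]; group
  have e2 : ⁅g * h, y⁆ = g * ⁅h, y⁆ * g⁻¹ := by
    rw [commutatorElement_mul_left_eq_conj_mul, hgy, mul_one]
  rcases hG.eq_one_or_eq_one_of_commutatorElement_mul_right hp hq hpq hx hy (e1 ▸ hgx)
    (by rw [e2, orderOf_conj]; exact hhy) with h1 | h1
  · exact hgx1 (e1 ▸ h1)
  · exact hhy1 (by simpa [e2] using h1)

theorem exists_isPGroup_commutator_top : ∃ p, p.Prime ∧ IsPGroup p ↥⁅(⊤ : Subgroup G), N⁆ := by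
  by_cases hbot : ⁅(⊤ : Subgroup G), N⁆ = ⊥
  · exact ⟨2, Nat.prime_two, hbot ▸ IsPGroup.of_bot⟩
  obtain ⟨g₀, -, x₀, hx₀, hne⟩ : ∃ g ∈ (⊤ : Subgroup G), ∃ x ∈ N, ⁅g, x⁆ ≠ 1 := by
    simpa [← le_bot_iff, Subgroup.commutator_le] using hbot
  obtain ⟨p, a, hp, hpa⟩ := hG.exists_prime_pow g₀ x₀
  have := Fact.mk hp
  obtain ⟨P⟩ := (inferInstance : Nonempty (Sylow p N))
  refine ⟨p, hp, (P.isPGroup'.map N.subtype).to_le (Subgroup.commutator_le.mpr ?_)⟩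
  intro g _ x hx
  obtain ⟨q, b, hq, hqb⟩ := hG.exists_prime_pow g x
  by_cases h1 : ⁅g, x⁆ = 1
  · rw [h1]
    exact one_mem _
  have hqp := hG.prime_eq_of_commutatorElement_ne_one hq hp hx hx₀ hqb h1 hpa hne
  exact ⟨⟨_, hN.commutatorElement_mem g hx⟩,
    P.mem_of_orderOf_eq_prime_pow (by rw [Subgroup.orderOf_mk, hqb, hqp]), rfl⟩

end IsCPPO

/-- The series of `fittingHeight`, except that `H 0` need only be central: unlike `H 0 = ⊥`, this
survives passing to `G ⧸ ⁅G, H 1⁆` and dropping the first term. -/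
structure IsNilpotentSeries {G : Type*} [Group G] (H : ℕ → Subgroup G) (n : ℕ) : Prop where
  zero_le_center : H 0 ≤ Subgroup.center G
  top : H n = ⊤
  normal : ∀ i, (H i).Normal
  relLCS_le : ∀ i < n, ∃ m, relLCS (H i) (H (i + 1)) m ≤ H i

namespace IsNilpotentSeries

variable {G : Type*} [Group G] {H : ℕ → Subgroup G} {n : ℕ}

theorem isNilpotent_one (hH : IsNilpotentSeries H (n + 1)) : Group.IsNilpotent (H 1) := by
  obtain ⟨m, hm⟩ := hH.relLCS_le 0 n.succ_pos
  exact isNilpotent_of_relLCS_le_center hH.zero_le_center hm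

theorem map_mk' (hH : IsNilpotentSeries H (n + 1)) (M : Subgroup G) [M.Normal]
    (hM : ⁅(⊤ : Subgroup G), H 1⁆ ≤ M) :
    IsNilpotentSeries (fun i ↦ (H (i + 1)).map (QuotientGroup.mk' M)) n where
  zero_le_center := map_mk'_le_center_of_commutator_le hM
  top := by
    simp only [hH.top]
    exact Subgroup.map_top_of_surjective _ (QuotientGroup.mk'_surjective M)
  normal i := (hH.normal (i + 1)).map _ (QuotientGroup.mk'_surjective M)
  relLCS_le i hi := by
    obtain ⟨m, hm⟩ := hH.relLCS_le (i + 1) (by omega)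
    exact ⟨m, (map_relLCS _ _ _ m).symm.le.trans (Subgroup.map_mono hm)⟩

end IsNilpotentSeries

theorem exists_isNilpotentSeries_fittingHeight {G : Type*} [Group G] (hG : Group.IsSolvable G) :
    ∃ H : ℕ → Subgroup G, IsNilpotentSeries H (fittingHeight G) := by
  obtain ⟨n, hn⟩ := hG.solvable
  have hmem : fittingHeight G ∈ {n : ℕ | ∃ H : ℕ → Subgroup G, H 0 = ⊥ ∧ H n = ⊤ ∧
      (∀ i, (H i).Normal) ∧ (∀ i, H i ≤ H (i + 1)) ∧
      ∀ i < n, ∃ m, relLCS (H i) (H (i + 1)) m ≤ H i} := by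
    refine Nat.sInf_mem ⟨n, fun i ↦ derivedSeries G (n - i), by simpa using hn, by simp,
      fun i ↦ derivedSeries_normal G _, fun i ↦ derivedSeries_antitone G (by omega),
      fun i hi ↦ ⟨1, sup_le (le_of_eq ?_) le_rfl⟩⟩
    change ⁅derivedSeries G (n - (i + 1)), derivedSeries G (n - (i + 1))⁆ =
      derivedSeries G (n - i)
    rw [← derivedSeries_succ]
    congr 1
    omega
  obtain ⟨H, h0, htop, hnormal, -, hrel⟩ := hmem
  exact ⟨H, h0 ▸ bot_le, htop, hnormal, hrel⟩

theorem card_primeFactors_commutator_le {G : Type*} [Group G] [Finite G] (hG : IsCPPO G)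
    {H : ℕ → Subgroup G} {n : ℕ} (hH : IsNilpotentSeries H n) :
    (Nat.card (commutator G)).primeFactors.card ≤ n := by
  induction n generalizing G with
  | zero =>
    have hab : commutator G = ⊥ := by
      rw [commutator_def, Subgroup.commutator_top_left_eq_bot_iff_le_center, ← hH.top]
      exact hH.zero_le_center
    simp [hab]
  | succ n ih =>
    have := hH.normal 1
    have := hH.isNilpotent_one
    set M := ⁅(⊤ : Subgroup G), H 1⁆
    have hQ := ih (hG.of_surjective _ (QuotientGroup.mk'_surjective M)) (hH.map_mk' M le_rfl)
    obtain ⟨p, hp, hM⟩ := hG.exists_isPGroup_commutator_top (N := H 1)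
    rw [card_commutator_eq_card_commutator_quotient_mul (M := M)
        (Subgroup.commutator_mono le_top le_top),
      Nat.primeFactors_mul Nat.card_pos.ne' Nat.card_pos.ne']
    exact (Finset.card_union_le _ _).trans
      (add_le_add hQ (hM.card_primeFactors_le_one hp))

theorem cppo_primes_of_commutator_le_fitting_height
    (G : Type*) [Group G] [Finite G] (hsol : IsSolvable G)
    (hcppo : ∀ x y : G, orderOf ⁅x, y⁆ = 1 ∨ IsPrimePow (orderOf ⁅x, y⁆)) :
    (Nat.card (commutator G)).primeFactors.card ≤ fittingHeight G := by
  obtain ⟨H, hH⟩ := exists_isNilpotentSeries_fittingHeight hsol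
  exact card_primeFactors_commutator_le hcppo hH
end

section
/- Let G be a finite soluble group with γ_∞(G) abelian, and T a system normalizer of G. Then T ∩ γ_∞(G) = 1. -/
open Pointwise

/-- A Sylow basis: pairwise permutable Sylow `p`-subgroups, one for each prime
dividing the order of the group. -/
def IsSylowBasis {G : Type*} [Group G] (S : ℕ → Subgroup G) : Prop :=
  (∀ p ∈ (Nat.card G).primeFactors,
      IsPGroup p (S p) ∧ ∀ Q : Subgroup G, IsPGroup p Q → S p ≤ Q → Q = S p) ∧
  (∀ p ∈ (Nat.card G).primeFactors, ∀ q ∈ (Nat.card G).primeFactors,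
      (S p : Set G) * (S q : Set G) = (S q : Set G) * (S p : Set G))

/-- The system normalizer of a Sylow basis. -/
def systemNormalizer {G : Type*} [Group G] (S : ℕ → Subgroup G) : Subgroup G :=
  ⨅ p ∈ (Nat.card G).primeFactors, Subgroup.normalizer (S p : Set G)

/-!
Write `L = γ_∞(G)`, so that `L = [L, G]` and `G / L` is nilpotent, and let `t ∈ T ∩ L` have prime
order `p`. For `q ≠ p` the element `t` normalizes the Sylow `q`-subgroup `S q` and lies in the
abelian normal subgroup `L`, so `[t, S q]` is a `p`-subgroup of `S q`, hence trivial: `t`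
centralizes the Hall `p'`-subgroup `H = ⟨S q | q ≠ p⟩`.

Since `G / L` is nilpotent, `N = H L` is normal, and `G = N (S p)`. Modulo `[L, N] = [L, H]` the
subgroup `N` centralizes `L`, so there `L = [L, S p]`; further modulo the `p'`-torsion of `L`, the
image of `L` is a normal `p`-subgroup equal to its commutator with the `p`-group `S p`, hence
trivial. Therefore `t ∈ [L, H]`. Finally the averaging map `a ↦ ∏_{h ∈ H} h a h⁻¹`, an
endomorphism of the abelian group `L`, kills `[L, H]` and sends `t` to `t ^ |H|`; as `p ∤ |H|`,
this forces `t = 1`.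
-/

open scoped commutatorElement

namespace Subgroup

variable {G : Type*} [Group G]

theorem coe_sup_of_mul_comm {A B : Subgroup G} (h : (A : Set G) * B = B * A) :
    ((A ⊔ B : Subgroup G) : Set G) = A * B := by
  refine subset_antisymm ?_ (Set.mul_subset_iff.mpr fun a ha b hb ↦
    mul_mem (mem_sup_left ha) (mem_sup_right hb))
  rw [sup_eq_closure_mul]
  intro x hx
  induction hx using closure_induction with
  | mem x hx => exact hx
  | one => exact ⟨1, one_mem A, 1, one_mem B, mul_one 1⟩
  | mul x y _ _ hx hy =>
    obtain ⟨a, ha, b, hb, rfl⟩ := hx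
    obtain ⟨a', ha', b', hb', rfl⟩ := hy
    obtain ⟨a'', ha'', b'', hb'', hba⟩ : b * a' ∈ (A : Set G) * B :=
      h ▸ Set.mul_mem_mul hb ha'
    refine ⟨a * a'', mul_mem ha ha'', b'' * b', mul_mem hb'' hb', ?_⟩
    simp only [mul_assoc, ← mul_assoc a'', hba]
  | inv x _ hx =>
    obtain ⟨a, ha, b, hb, rfl⟩ := hx
    rw [mul_inv_rev, h]
    exact Set.mul_mem_mul (B.inv_mem hb) (A.inv_mem ha)

theorem card_sup_of_mul_comm {A B : Subgroup G} (h : (A : Set G) * B = B * A)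
    (hAB : Disjoint A B) : Nat.card ↥(A ⊔ B) = Nat.card A * Nat.card B := by
  have hinj : Set.InjOn (QuotientGroup.mk : G → G ⧸ B) A := by
    intro a ha a' ha' haa'
    have hmem : a⁻¹ * a' ∈ A ⊓ B :=
      mem_inf.mpr ⟨mul_mem (inv_mem ha) ha', QuotientGroup.eq.mp haa'⟩
    rw [hAB.eq_bot, mem_bot, inv_mul_eq_one] at hmem
    exact hmem
  rw [← SetLike.coe_sort_coe, coe_sup_of_mul_comm h,
    card_mul_eq_card_subgroup_mul_card_quotient, Nat.card_image_of_injOn hinj, mul_comm]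
  rfl

variable {ι : Type*} {U : Finset ι} {S : ι → Subgroup G}

theorem mul_comm_biSup (hS : ∀ i ∈ U, ∀ j ∈ U, (S i : Set G) * S j = S j * S i)
    {F : Finset ι} (hF : F ⊆ U) {j : ι} (hj : j ∈ U) :
    (S j : Set G) * ↑(⨆ i ∈ F, S i) = ↑(⨆ i ∈ F, S i) * S j := by
  classical
  induction F using Finset.induction_on generalizing j with
  | empty => simp
  | insert a F _ ih =>
    have ha : a ∈ U := hF (Finset.mem_insert_self a F)
    have hFU : F ⊆ U := (Finset.subset_insert a F).trans hF
    rw [Finset.iSup_insert, coe_sup_of_mul_comm (ih hFU ha), ← mul_assoc, hS j hj a ha,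
      mul_assoc, ih hFU hj, mul_assoc]

theorem card_biSup_of_mul_comm (hS : ∀ i ∈ U, ∀ j ∈ U, (S i : Set G) * S j = S j * S i)
    (hcop : ∀ i ∈ U, ∀ j ∈ U, i ≠ j → (Nat.card (S i)).Coprime (Nat.card (S j)))
    {F : Finset ι} (hF : F ⊆ U) :
    Nat.card ↥(⨆ i ∈ F, S i) = ∏ i ∈ F, Nat.card (S i) := by
  classical
  induction F using Finset.induction_on with
  | empty => simp
  | insert a F haF ih =>
    have ha : a ∈ U := hF (Finset.mem_insert_self a F)
    have hFU : F ⊆ U := (Finset.subset_insert a F).trans hF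
    have hdisj : Disjoint (S a) (⨆ i ∈ F, S i) := by
      refine disjoint_of_coprime_natCard ?_
      rw [ih hFU]
      exact Nat.Coprime.prod_right fun i hi ↦
        hcop a ha i (hFU hi) (ne_of_mem_of_not_mem hi haF).symm
    rw [Finset.iSup_insert, card_sup_of_mul_comm (mul_comm_biSup hS hFU ha) hdisj, ih hFU,
      Finset.prod_insert haF]

theorem eq_top_of_forall_sylow_le [Finite G] {K : Subgroup G}
    (hK : ∀ p ∈ (Nat.card G).primeFactors, ∃ P : Sylow p G, (P : Subgroup G) ≤ K) :
    K = ⊤ := by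
  rw [← index_eq_one]
  by_contra hK1
  have hr : K.index.minFac.Prime := Nat.minFac_prime hK1
  have hrK : K.index.minFac ∣ K.index := Nat.minFac_dvd _
  have := Fact.mk hr
  obtain ⟨P, hP⟩ :=
    hK _ (Nat.mem_primeFactors.mpr ⟨hr, hrK.trans K.index_dvd_card, Nat.card_pos.ne'⟩)
  exact P.not_dvd_index (hrK.trans (index_dvd_of_le hP))

theorem eq_bot_of_le_commutator {V K : Subgroup G} [Group.IsNilpotent K] (hVK : V ≤ K)
    (hV : V ≤ ⁅V, K⁆) : V = ⊥ := by
  obtain ⟨n, hn⟩ := (isNilpotent_iff_lowerCentralSeries K).mp ‹_›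
  have hle : ∀ n, V ≤ K.lowerCentralSeries n := fun n ↦ by
    induction n with
    | zero => exact hVK
    | succ n ih => exact hV.trans (commutator_mono ih le_rfl)
  exact le_bot_iff.mp (hn ▸ hle n)

theorem isNilpotent_quotient_of_lowerCentralSeries_le {N : Subgroup G} [N.Normal] {n : ℕ}
    (h : (⊤ : Subgroup G).lowerCentralSeries n ≤ N) : Group.IsNilpotent (G ⧸ N) := by
  refine nilpotent_iff_lowerCentralSeries.mpr ⟨n, ?_⟩
  rwa [← map_top_of_surjective _ (QuotientGroup.mk'_surjective N), ← map_lowerCentralSeries,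
    map_eq_bot_iff, QuotientGroup.ker_mk']

theorem exists_lowerCentralSeries_eq_iInf [Finite G] (S : Subgroup G) :
    ∃ n, ∀ m, n ≤ m → S.lowerCentralSeries m = ⨅ i, S.lowerCentralSeries i := by
  obtain ⟨n, hn⟩ := WellFoundedLT.antitone_chain_condition S.lowerCentralSeries_antitone
  refine ⟨n, fun m hm ↦ le_antisymm (le_iInf fun i ↦ ?_) (iInf_le _ m)⟩
  rcases le_total i m with h | h
  · exact lowerCentralSeries_antitone _ h
  · rw [← hn m hm, hn i (hm.trans h)]

theorem commutator_top_le_sup {A N P : Subgroup G} [A.Normal] [N.Normal] (h : N ⊔ P = ⊤) :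
    ⁅A, ⊤⁆ ≤ ⁅A, P⁆ ⊔ ⁅A, N⁆ := by
  rw [commutator_le]
  intro a ha g _
  obtain ⟨n, hn, s, hs, rfl⟩ : g ∈ (N : Set G) * P := by rw [← normal_mul, h]; trivial
  have hy : ⁅a, s⁆ ∈ A := commutator_le_left A P (commutator_mem_commutator ha hs)
  have hsplit : ⁅a, n * s⁆ = ⁅a, n⁆ * ⁅⁅a, s⁆, n⁆⁻¹ * ⁅a, s⁆ := by
    simp only [commutatorElement_def]; group
  rw [hsplit]
  exact mul_mem (mul_mem (mem_sup_right (commutator_mem_commutator ha hn))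
    (inv_mem (mem_sup_right (commutator_mem_commutator hy hn))))
    (mem_sup_left (commutator_mem_commutator ha hs))

section Abelian

variable {A : Subgroup G} [IsMulCommutative A]

theorem commutator_sup_self_right [A.Normal] (H : Subgroup G) : ⁅A, H ⊔ A⁆ = ⁅A, H⁆ := by
  refine le_antisymm ?_ (commutator_mono le_rfl le_sup_left)
  rw [commutator_le]
  intro a ha g hg
  obtain ⟨h, hh, a', ha', rfl⟩ : g ∈ (H : Set G) * A := mul_normal H A ▸ hg
  have hsplit : ⁅a, h * a'⁆ = ⁅a, h⁆ := by
    calc ⁅a, h * a'⁆ = a * h * (a' * a⁻¹) * a'⁻¹ * h⁻¹ := by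
          simp only [commutatorElement_def]; group
      _ = a * h * (a⁻¹ * a') * a'⁻¹ * h⁻¹ := by rw [setLike_mul_comm ha' (inv_mem ha)]
      _ = ⁅a, h⁆ := by simp only [commutatorElement_def]; group
  rw [hsplit]
  exact commutator_mem_commutator ha hh

theorem commute_of_mem_normalizer [A.Normal] {q : ℕ} {Q : Subgroup G} (hQ : IsPGroup q Q)
    {t : G} (htA : t ∈ A) (ht : (orderOf t).Coprime q) (htQ : t ∈ normalizer (Q : Set G))
    {s : G} (hs : s ∈ Q) : Commute t s := by
  have hyA : s * t⁻¹ * s⁻¹ ∈ A := Normal.conj_mem ‹_› _ (inv_mem htA) s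
  have hcQ : ⁅t, s⁆ ∈ Q := by
    rw [commutatorElement_def]
    exact mul_mem ((mem_normalizer_iff.mp htQ s).mp hs) (inv_mem hs)
  have hct : ⁅t, s⁆ ^ orderOf t = 1 := by
    rw [show ⁅t, s⁆ = t * (s * t⁻¹ * s⁻¹) by simp only [commutatorElement_def]; group,
      (Commute.mul_pow (setLike_mul_comm htA hyA)), conj_pow, inv_pow, pow_orderOf_eq_one]
    group
  obtain ⟨n, hn⟩ := hQ ⟨_, hcQ⟩
  have hcq : ⁅t, s⁆ ^ q ^ n = 1 := by simpa using congrArg Subtype.val hn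
  refine commutatorElement_eq_one_iff_commute.mp (orderOf_eq_one_iff.mp ?_)
  exact Nat.Coprime.eq_one_of_dvd ((ht.pow_right n).coprime_dvd_left
    (orderOf_dvd_of_pow_eq_one hct)) (orderOf_dvd_of_pow_eq_one hcq)

open IsMulCommutative in
theorem pow_card_eq_one_of_mem_commutator [A.Normal] {H : Subgroup G} [Finite H] {t : G}
    (ht : t ∈ ⁅A, H⁆) (htH : ∀ h ∈ H, Commute t h) : t ^ Nat.card H = 1 := by
  classical
  have := Fintype.ofFinite H
  let θ : A →* A := ∏ h : H, (MulAut.conjNormal (h : G)).toMonoidHom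
  have hθ (a : A) : θ a = ∏ h : H, MulAut.conjNormal (h : G) a := MonoidHom.finsetProd_apply ..
  have hθconj (a : A) (h₀ : H) : θ (MulAut.conjNormal (h₀ : G) a) = θ a := by
    simp only [hθ]
    exact Fintype.prod_equiv (Equiv.mulRight h₀) _ _ fun h ↦ by simp [MulAut.mul_apply]
  have hker : ⁅A, H⁆ ≤ θ.ker.map A.subtype := by
    rw [commutator_le]
    intro a ha h hh
    refine ⟨⟨a, ha⟩ * (MulAut.conjNormal h ⟨a, ha⟩)⁻¹, ?_, ?_⟩
    · rw [SetLike.mem_coe, MonoidHom.mem_ker, map_mul, map_inv, hθconj ⟨a, ha⟩ ⟨h, hh⟩,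
        mul_inv_cancel]
    · simp [commutatorElement_def, MulAut.conjNormal_apply, mul_assoc]
  obtain ⟨x, hx, rfl⟩ := hker ht
  have hθx : θ x = x ^ Nat.card H := by
    rw [hθ, Nat.card_eq_fintype_card, ← Finset.card_univ, ← Finset.prod_const]
    refine Finset.prod_congr rfl fun h _ ↦ Subtype.ext ?_
    rw [MulAut.conjNormal_apply]
    exact mul_inv_eq_iff_eq_mul.mpr (htH h h.2).eq.symm
  rw [coe_subtype, ← coe_pow, ← hθx, hx, OneMemClass.coe_one]

variable (A) in
def torsionBy (n : ℕ) : Subgroup G where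
  carrier := {x | x ∈ A ∧ x ^ n = 1}
  mul_mem' := fun ⟨hx, hxn⟩ ⟨hy, hyn⟩ ↦
    ⟨mul_mem hx hy, by rw [Commute.mul_pow (setLike_mul_comm hx hy), hxn, hyn, one_mul]⟩
  one_mem' := ⟨one_mem A, one_pow n⟩
  inv_mem' := fun ⟨hx, hxn⟩ ↦ ⟨inv_mem hx, by rw [inv_pow, hxn, inv_one]⟩

instance [A.Normal] (n : ℕ) : (A.torsionBy n).Normal :=
  ⟨fun x ⟨hx, hxn⟩ g ↦
    ⟨Normal.conj_mem ‹_› x hx g, by rw [conj_pow, hxn, mul_one, mul_inv_cancel]⟩⟩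

theorem eq_one_of_le_commutator [A.Normal] [Finite G] {p : ℕ} [hp : Fact p.Prime]
    {P : Subgroup G} (hP : IsPGroup p P) (hAP : A ≤ ⁅A, P⁆) {a : G} (ha : a ∈ A) {k : ℕ}
    (hak : a ^ p ^ k = 1) : a = 1 := by
  obtain ⟨α, m, hpm, hcard⟩ :=
    Nat.exists_eq_pow_mul_and_not_dvd (Nat.card_pos (α := A)).ne' p hp.out.ne_one
  let π := QuotientGroup.mk' (A.torsionBy m)
  have hπ : Function.Surjective π := QuotientGroup.mk'_surjective _
  have := ‹A.Normal›.map π hπ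
  have hAbar : IsPGroup p (A.map π) := by
    rintro ⟨_, x, hx, rfl⟩
    refine ⟨α, Subtype.ext ?_⟩
    rw [SubgroupClass.coe_pow, ← map_pow, OneMemClass.coe_one, QuotientGroup.mk'_apply,
      QuotientGroup.eq_one_iff]
    refine ⟨pow_mem hx _, ?_⟩
    rw [← pow_mul, ← hcard]
    exact orderOf_dvd_iff_pow_eq_one.mp (A.orderOf_dvd_natCard hx)
  have := (hAbar.to_sup_of_normal_left (hP.map π)).isNilpotent
  have hbot : A.map π = ⊥ := by
    refine eq_bot_of_le_commutator (K := A.map π ⊔ P.map π) le_sup_left ?_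
    calc A.map π ≤ map π ⁅A, P⁆ := map_mono hAP
      _ = ⁅A.map π, P.map π⁆ := map_commutator ..
      _ ≤ ⁅A.map π, A.map π ⊔ P.map π⁆ := commutator_mono le_rfl le_sup_right
  rw [map_eq_bot_iff, QuotientGroup.ker_mk'] at hbot
  have hcop : (p ^ k).Coprime m := Nat.Coprime.pow_left _ (hp.out.coprime_iff_not_dvd.mpr hpm)
  simpa [hcop] using pow_gcd_eq_one.mpr ⟨hak, (hbot ha).2⟩

theorem mem_commutator_of_sup_eq_top [A.Normal] [Finite G] {p : ℕ} [Fact p.Prime]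
    {N P : Subgroup G} [N.Normal] (hA : ⁅A, ⊤⁆ = A) (hP : IsPGroup p P) (hNP : N ⊔ P = ⊤)
    {a : G} (ha : a ∈ A) {k : ℕ} (hak : a ^ p ^ k = 1) : a ∈ ⁅A, N⁆ := by
  let π := QuotientGroup.mk' ⁅A, N⁆
  have := ‹A.Normal›.map π (QuotientGroup.mk'_surjective _)
  have hAP : A.map π ≤ ⁅A.map π, P.map π⁆ := by
    calc A.map π = map π ⁅A, ⊤⁆ := by rw [hA]
      _ ≤ map π (⁅A, P⁆ ⊔ ⁅A, N⁆) := map_mono (commutator_top_le_sup hNP)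
      _ = ⁅A.map π, P.map π⁆ := by
        rw [map_sup, map_commutator, (map_eq_bot_iff _).mpr (QuotientGroup.ker_mk' _).ge,
          sup_bot_eq]
  rw [← QuotientGroup.eq_one_iff]
  exact eq_one_of_le_commutator (hP.map π) hAP (mem_map_of_mem π ha) (k := k)
    (by rw [← QuotientGroup.mk_pow, hak, QuotientGroup.mk_one])

end Abelian

end Subgroup

section SylowBasis

open Subgroup

variable {G : Type*} [Group G]

theorem mem_systemNormalizer_iff {S : ℕ → Subgroup G} {g : G} :
    g ∈ systemNormalizer S ↔
      ∀ p ∈ (Nat.card G).primeFactors, g ∈ normalizer (S p : Set G) := by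
  simp [systemNormalizer, mem_iInf]

def hallComplement (S : ℕ → Subgroup G) (p : ℕ) : Subgroup G :=
  ⨆ q ∈ (Nat.card G).primeFactors.erase p, S q

namespace IsSylowBasis

variable {S : ℕ → Subgroup G} {p : ℕ}

def toSylow (hS : IsSylowBasis S) (hp : p ∈ (Nat.card G).primeFactors) : Sylow p G :=
  ⟨S p, (hS.1 p hp).1, fun hQ hle ↦ (hS.1 p hp).2 _ hQ hle⟩

theorem card_eq_multiplicity [Finite G] (hS : IsSylowBasis S)
    (hp : p ∈ (Nat.card G).primeFactors) :
    Nat.card (S p) = p ^ (Nat.card G).factorization p :=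
  have := Fact.mk (Nat.prime_of_mem_primeFactors hp)
  (hS.toSylow hp).card_eq_multiplicity

theorem coprime_card_hallComplement [Finite G] (hS : IsSylowBasis S) (hp : p.Prime) :
    p.Coprime (Nat.card (hallComplement S p)) := by
  rw [hallComplement, card_biSup_of_mul_comm hS.2 ?_ (Finset.erase_subset p _)]
  · refine Nat.Coprime.prod_right fun q hq ↦ ?_
    have hq' := Finset.mem_of_mem_erase hq
    rw [hS.card_eq_multiplicity hq']
    exact Nat.Coprime.pow_right _
      ((Nat.coprime_primes hp (Nat.prime_of_mem_primeFactors hq')).mpr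
        (Finset.ne_of_mem_erase hq).symm)
  · intro i hi j hj hij
    rw [hS.card_eq_multiplicity hi, hS.card_eq_multiplicity hj]
    exact Nat.coprime_pow_primes _ _ (Nat.prime_of_mem_primeFactors hi)
      (Nat.prime_of_mem_primeFactors hj) hij

theorem sup_hallComplement_eq_top [Finite G] (hS : IsSylowBasis S)
    (hp : p ∈ (Nat.card G).primeFactors) : S p ⊔ hallComplement S p = ⊤ := by
  refine eq_top_of_forall_sylow_le fun q hq ↦ ⟨hS.toSylow hq, ?_⟩
  rcases eq_or_ne q p with rfl | hqp
  · exact le_sup_left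
  · exact le_sup_of_le_right (le_biSup S (Finset.mem_erase.mpr ⟨hqp, hq⟩))

theorem hallComplement_sup_normal [Finite G] (hS : IsSylowBasis S) {L : Subgroup G} [L.Normal]
    [Group.IsNilpotent (G ⧸ L)] : (hallComplement S p ⊔ L).Normal := by
  let π := QuotientGroup.mk' L
  have hmap : ∀ q, (map π (⨆ _ : q ∈ (Nat.card G).primeFactors.erase p, S q)).Normal := by
    intro q
    by_cases hq : q ∈ (Nat.card G).primeFactors.erase p
    · have hq' := Finset.mem_of_mem_erase hq
      have := Fact.mk (Nat.prime_of_mem_primeFactors hq')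
      rw [iSup_pos hq]
      change (map π (hS.toSylow hq' : Subgroup G)).Normal
      rw [← Sylow.coe_mapSurjective (QuotientGroup.mk'_surjective L)]
      infer_instance
    · rw [iSup_neg hq, Subgroup.map_bot]
      infer_instance
  rw [← QuotientGroup.ker_mk' L, ← comap_map_eq, hallComplement, Subgroup.map_iSup]
  exact Normal.comap (iSup_normal _) π

theorem commute_of_mem_hallComplement (hS : IsSylowBasis S) {A : Subgroup G} [A.Normal]
    [IsMulCommutative A] (hp : p.Prime) {t : G} (htT : t ∈ systemNormalizer S) (htA : t ∈ A)
    (ht : t ^ p = 1) : ∀ h ∈ hallComplement S p, Commute t h := by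
  suffices hallComplement S p ≤ centralizer {t} from
    fun h hh ↦ (mem_centralizer_singleton_iff.mp (this hh)).symm
  refine iSup₂_le fun q hq h hh ↦ mem_centralizer_singleton_iff.mpr (Eq.symm ?_)
  have hq' := Finset.mem_of_mem_erase hq
  have hcop : (orderOf t).Coprime q :=
    ((Nat.coprime_primes hp (Nat.prime_of_mem_primeFactors hq')).mpr
      (Finset.ne_of_mem_erase hq).symm).coprime_dvd_left (orderOf_dvd_of_pow_eq_one ht)
  exact commute_of_mem_normalizer (hS.1 q hq').1 htA hcop
    (mem_systemNormalizer_iff.mp htT q hq') hh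

theorem eq_one_of_mem_systemNormalizer [Finite G] (hS : IsSylowBasis S) {L : Subgroup G}
    [L.Normal] [IsMulCommutative L] [Group.IsNilpotent (G ⧸ L)] (hL : ⁅L, ⊤⁆ = L)
    (hp : p ∈ (Nat.card G).primeFactors) {t : G} (htT : t ∈ systemNormalizer S) (htL : t ∈ L)
    (ht : t ^ p = 1) : t = 1 := by
  have hpp := Nat.prime_of_mem_primeFactors hp
  have := Fact.mk hpp
  have := hS.hallComplement_sup_normal (p := p) (L := L)
  have htop : hallComplement S p ⊔ L ⊔ S p = ⊤ :=
    top_le_iff.mp ((hS.sup_hallComplement_eq_top hp).ge.trans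
      (sup_le le_sup_right (le_sup_left.trans le_sup_left)))
  have htW : t ∈ ⁅L, hallComplement S p⁆ := by
    rw [← commutator_sup_self_right]
    exact mem_commutator_of_sup_eq_top hL (hS.1 p hp).1 htop htL (k := 1) (by rwa [pow_one])
  have htH :=
    pow_card_eq_one_of_mem_commutator htW (hS.commute_of_mem_hallComplement hpp htT htL ht)
  simpa [hS.coprime_card_hallComplement hpp] using pow_gcd_eq_one.mpr ⟨ht, htH⟩

end IsSylowBasis

end SylowBasis

theorem system_normalizer_disjoint_abelian_residual_general
    (G : Type*) [Group G] [Finite G]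
    (hab : ∀ x ∈ ⨅ i, Subgroup.lowerCentralSeries (⊤ : Subgroup G) i, ∀ y ∈ ⨅ i, Subgroup.lowerCentralSeries (⊤ : Subgroup G) i,
      Commute x y)
    (S : ℕ → Subgroup G) (hS : IsSylowBasis S) :
    systemNormalizer S ⊓ (⨅ i, Subgroup.lowerCentralSeries (⊤ : Subgroup G) i) = ⊥ := by
  obtain ⟨n, hn⟩ := Subgroup.exists_lowerCentralSeries_eq_iInf (⊤ : Subgroup G)
  set L := ⨅ i, (⊤ : Subgroup G).lowerCentralSeries i
  have : L.Normal := hn n le_rfl ▸ Subgroup.lowerCentralSeries_normal ⊤ n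
  have : IsMulCommutative L := .of_setLike_mul_comm fun x hx y hy ↦ (hab x hx y hy).eq
  have : Group.IsNilpotent (G ⧸ L) :=
    Subgroup.isNilpotent_quotient_of_lowerCentralSeries_le (hn n le_rfl).le
  have hL : ⁅L, ⊤⁆ = L := by
    simpa only [Subgroup.lowerCentralSeries_succ, hn n le_rfl] using hn (n + 1) n.le_succ
  refine eq_bot_iff.mpr fun x hx ↦ Subgroup.mem_bot.mpr (by_contra fun hx1 ↦ ?_)
  obtain ⟨hxT, hxL⟩ := Subgroup.mem_inf.mp hx
  set p := (orderOf x).minFac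
  have hp : p.Prime := Nat.minFac_prime (orderOf_eq_one_iff.not.mpr hx1)
  have hpG : p ∈ (Nat.card G).primeFactors :=
    Nat.mem_primeFactors.mpr
      ⟨hp, (Nat.minFac_dvd _).trans (orderOf_dvd_natCard x), Nat.card_pos.ne'⟩
  set t := x ^ (orderOf x / p)
  have hpt : orderOf t = p := orderOf_pow_orderOf_div (orderOf_pos x).ne' (Nat.minFac_dvd _)
  have ht1 : t ≠ 1 := fun h ↦ hp.one_lt.ne' (hpt ▸ orderOf_eq_one_iff.mpr h)
  exact ht1 (hS.eq_one_of_mem_systemNormalizer hL hpG (pow_mem hxT _) (pow_mem hxL _)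
    (hpt ▸ pow_orderOf_eq_one t))

theorem system_normalizer_disjoint_abelian_residual
    (G : Type*) [Group G] [Finite G] (hsol : IsSolvable G)
    (hab : ∀ x ∈ ⨅ i, Subgroup.lowerCentralSeries (⊤ : Subgroup G) i, ∀ y ∈ ⨅ i, Subgroup.lowerCentralSeries (⊤ : Subgroup G) i,
      Commute x y)
    (S : ℕ → Subgroup G) (hS : IsSylowBasis S) :
    systemNormalizer S ⊓ (⨅ i, Subgroup.lowerCentralSeries (⊤ : Subgroup G) i) = ⊥ :=
  system_normalizer_disjoint_abelian_residual_general G hab S hS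
end
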